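/- arXiv:2507.21603 — 8 statements merged into one kernel-verified Lean document; each statement's English description precedes it below -/
import Mathlib

section
/- Let N be a finite set, a > 0, and for each i ∈ N let m_i = [m̲_i, m̅_i] be an interval with 0 ≤ m̲_i ≤ m̅_i. Define the border games w̲(S) = 2a·√(Σ_{i∈S} m̲_i²) and w̅(S) = 2a·√(Σ_{i∈S} m̅_i²). Then the interval inventory game w^I(S) = [w̲(S), w̅(S)] is concave: for every i ∈ N and all S ⊆ T ⊆ N \ {i}, both w̲(S ∪ {i}) − w̲(S) ≥ w̲(T ∪ {i}) − w̲(T) and w̅(S ∪ {i}) − w̅(S) ≥ w̅(T ∪ {i}) − w̅(T) hold. -/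
lemma sqrt_marginal {s t c : ℝ} (hs : 0 ≤ s) (hst : s ≤ t) (hc : 0 ≤ c) :
    Real.sqrt (c + s) - Real.sqrt s ≥ Real.sqrt (c + t) - Real.sqrt t := by
  have ht : 0 ≤ t := hs.trans hst
  have hA := Real.sq_sqrt (by linarith : (0:ℝ) ≤ c + s)
  have hB := Real.sq_sqrt hs
  have hC := Real.sq_sqrt (by linarith : (0:ℝ) ≤ c + t)
  have hD := Real.sq_sqrt ht
  have hAn := Real.sqrt_nonneg (c + s)
  have hBn := Real.sqrt_nonneg s
  have hCn := Real.sqrt_nonneg (c + t)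
  have hDn := Real.sqrt_nonneg t
  have h1 : Real.sqrt s ≤ Real.sqrt t := Real.sqrt_le_sqrt hst
  have h2 : Real.sqrt (c + s) ≤ Real.sqrt (c + t) := Real.sqrt_le_sqrt (by linarith)
  have e1 : (Real.sqrt (c + s) - Real.sqrt s) * (Real.sqrt (c + s) + Real.sqrt s) = c := by
    ring_nf; nlinarith [hA, hB]
  have e2 : (Real.sqrt (c + t) - Real.sqrt t) * (Real.sqrt (c + t) + Real.sqrt t) = c := by
    ring_nf; nlinarith [hC, hD]
  have hy : 0 ≤ Real.sqrt (c + t) - Real.sqrt t := by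
    have := Real.sqrt_le_sqrt (by linarith : t ≤ c + t); linarith
  nlinarith [mul_nonneg hy (by linarith : (0:ℝ) ≤ (Real.sqrt (c + t) + Real.sqrt t) - (Real.sqrt (c + s) + Real.sqrt s))]

lemma key {s t c : ℝ} (hs : 0 ≤ s) (hst : s ≤ t) (hc : 0 ≤ c) (a : ℝ) (ha : 0 < a) :
    2 * a * Real.sqrt (c + s) - 2 * a * Real.sqrt s ≥
      2 * a * Real.sqrt (c + t) - 2 * a * Real.sqrt t := by
  have := sqrt_marginal hs hst hc
  nlinarith

/-- The interval inventory game `w^I(S) = [w̲(S), w̅(S)]` with border games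
`w̲(S) = 2a·√(∑_{i∈S} m̲ᵢ²)` and `w̅(S) = 2a·√(∑_{i∈S} m̅ᵢ²)` (where
`0 ≤ m̲ᵢ ≤ m̅ᵢ` and `a > 0`) is concave: for every `i ∈ N` and `S ⊆ T ⊆ N \ {i}`,
the marginal-contribution inequality holds in both endpoints. -/
theorem interval_inventory_game_concave {ι : Type*} [DecidableEq ι] (N : Finset ι)
    (a : ℝ) (ha : 0 < a) (ml mu : ι → ℝ)
    (h0 : ∀ i ∈ N, 0 ≤ ml i) (h1 : ∀ i ∈ N, ml i ≤ mu i)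
    (wl wu : Finset ι → ℝ)
    (hwl : ∀ S : Finset ι, wl S = 2 * a * Real.sqrt (∑ i ∈ S, (ml i) ^ 2))
    (hwu : ∀ S : Finset ι, wu S = 2 * a * Real.sqrt (∑ i ∈ S, (mu i) ^ 2)) :
    ∀ i ∈ N, ∀ S T : Finset ι, S ⊆ T → T ⊆ N \ {i} →
      wl (insert i S) - wl S ≥ wl (insert i T) - wl T ∧
      wu (insert i S) - wu S ≥ wu (insert i T) - wu T := by
  intro i hi S T hST hTN
  have hiT : i ∉ T := by
    intro h
    exact (Finset.mem_sdiff.mp (hTN h)).2 (Finset.mem_singleton_self i)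
  have hiS : i ∉ S := fun h => hiT (hST h)
  constructor
  · rw [hwl, hwl, hwl, hwl, Finset.sum_insert hiS, Finset.sum_insert hiT]
    exact key (Finset.sum_nonneg fun j _ => sq_nonneg _)
      (Finset.sum_le_sum_of_subset_of_nonneg hST fun j _ _ => sq_nonneg _)
      (sq_nonneg _) a ha
  · rw [hwu, hwu, hwu, hwu, Finset.sum_insert hiS, Finset.sum_insert hiT]
    exact key (Finset.sum_nonneg fun j _ => sq_nonneg _)
      (Finset.sum_le_sum_of_subset_of_nonneg hST fun j _ _ => sq_nonneg _)
      (sq_nonneg _) a ha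
end

section
/- Let N be a finite set, a > 0, and m_i ≥ 0 for i ∈ N with Σ_{i∈N} m_i² > 0, and define the inventory cost game c(S) = 2a·√(Σ_{i∈S} m_i²). Then the SOC-rule allocation σ_j = 2a·m_j²/√(Σ_{i∈N} m_i²) lies in the core of (N, c): Σ_{j∈N} σ_j = c(N), and for every coalition S ⊆ N, Σ_{j∈S} σ_j ≤ c(S). -/
/-- For the inventory cost game `c(S) = 2a·√(∑_{i∈S} mᵢ²)` with `a > 0`, `mᵢ ≥ 0` and
`∑_{i∈N} mᵢ² > 0`, the SOC-rule allocation `σⱼ = 2a·mⱼ²/√(∑_{i∈N} mᵢ²)` lies in the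
core: it is efficient and no coalition pays more than its own cost. -/
theorem soc_rule_in_core {ι : Type*} [DecidableEq ι] (N : Finset ι)
    (a : ℝ) (ha : 0 < a) (m : ι → ℝ) (hm : ∀ i ∈ N, 0 ≤ m i)
    (hpos : 0 < ∑ i ∈ N, (m i) ^ 2)
    (c : Finset ι → ℝ)
    (hc : ∀ S : Finset ι, c S = 2 * a * Real.sqrt (∑ i ∈ S, (m i) ^ 2))
    (σ : ι → ℝ)
    (hσ : ∀ j : ι, σ j = 2 * a * (m j) ^ 2 / Real.sqrt (∑ i ∈ N, (m i) ^ 2)) :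
    (∑ j ∈ N, σ j = c N) ∧ ∀ S : Finset ι, S ⊆ N → ∑ j ∈ S, σ j ≤ c S := by
  set T := ∑ i ∈ N, (m i) ^ 2 with hT
  have hsqrtT : 0 < Real.sqrt T := Real.sqrt_pos.mpr hpos
  have hsum : ∀ S : Finset ι, ∑ j ∈ S, σ j = 2 * a * (∑ i ∈ S, (m i) ^ 2) / Real.sqrt T := by
    intro S
    simp only [hσ]
    rw [Finset.mul_sum, Finset.sum_div]
  constructor
  · rw [hsum, hc, ← hT, div_eq_iff hsqrtT.ne', mul_assoc, mul_assoc,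
      Real.mul_self_sqrt hpos.le]; ring
  · intro S hS
    rw [hsum, hc]
    set U := ∑ i ∈ S, (m i) ^ 2 with hU
    have hU0 : 0 ≤ U := Finset.sum_nonneg fun i _ => sq_nonneg _
    have hUT : U ≤ T := Finset.sum_le_sum_of_subset_of_nonneg hS
      (fun i _ _ => sq_nonneg _)
    rw [div_le_iff₀ hsqrtT]
    have : U ≤ Real.sqrt U * Real.sqrt T := by
      calc U = Real.sqrt U * Real.sqrt U := (Real.mul_self_sqrt hU0).symm
        _ ≤ Real.sqrt U * Real.sqrt T :=
          mul_le_mul_of_nonneg_left (Real.sqrt_le_sqrt hUT) (Real.sqrt_nonneg _)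
    nlinarith [Real.sqrt_nonneg U, Real.sqrt_nonneg T]
end

section
/- Let N be a finite set, a > 0, and for each i ∈ N let m_i = [m̲_i, m̅_i] with 0 ≤ m̲_i ≤ m̅_i, with Σ_{i∈N} m̲_i² > 0. Then the interval SOC-rule Γ_j = [2a·m̲_j²/√(Σ_{i∈N} m̲_i²), 2a·m̅_j²/√(Σ_{i∈N} m̅_i²)] is Cross-Coalition Acceptable: for every coalition S ⊆ N, Σ_{j∈S} 2a·m̲_j²/√(Σ_{i∈N} m̲_i²) ≤ 2a·√(Σ_{j∈S} m̲_j²) and Σ_{j∈S} 2a·m̅_j²/√(Σ_{i∈N} m̅_i²) ≤ 2a·√(Σ_{j∈S} m̅_j²). -/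
lemma aux_soc {ι : Type*} (N S : Finset ι) (hS : S ⊆ N) (f : ι → ℝ)
    (hpos : 0 < ∑ i ∈ N, (f i) ^ 2) :
    (∑ j ∈ S, (f j) ^ 2) / Real.sqrt (∑ i ∈ N, (f i) ^ 2)
      ≤ Real.sqrt (∑ j ∈ S, (f j) ^ 2) := by
  have hSN : (∑ j ∈ S, (f j) ^ 2) ≤ ∑ i ∈ N, (f i) ^ 2 :=
    Finset.sum_le_sum_of_subset_of_nonneg hS (fun i _ _ => sq_nonneg _)
  have hS0 : 0 ≤ ∑ j ∈ S, (f j) ^ 2 := Finset.sum_nonneg fun i _ => sq_nonneg _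
  rw [div_le_iff₀ (Real.sqrt_pos.mpr hpos)]
  calc (∑ j ∈ S, (f j) ^ 2)
      = Real.sqrt (∑ j ∈ S, (f j) ^ 2) * Real.sqrt (∑ j ∈ S, (f j) ^ 2) := by
        rw [Real.mul_self_sqrt hS0]
    _ ≤ Real.sqrt (∑ j ∈ S, (f j) ^ 2) * Real.sqrt (∑ i ∈ N, (f i) ^ 2) :=
        mul_le_mul_of_nonneg_left (Real.sqrt_le_sqrt hSN) (Real.sqrt_nonneg _)

/-- The interval SOC-rule `Γⱼ = [2a·m̲ⱼ²/√(∑_{i∈N} m̲ᵢ²), 2a·m̅ⱼ²/√(∑_{i∈N} m̅ᵢ²)]`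
for an interval inventory situation (with `a > 0`, `0 ≤ m̲ᵢ ≤ m̅ᵢ` and
`∑_{i∈N} m̲ᵢ² > 0`) is Cross-Coalition Acceptable: for every coalition `S ⊆ N`,
the sum of the allocated intervals over `S` is at most, in both endpoints, the
interval cost `2a·√(∑_{j∈S} mⱼ²)` of `S`. -/
theorem interval_soc_rule_CCA {ι : Type*} [DecidableEq ι] (N : Finset ι)
    (a : ℝ) (ha : 0 < a) (ml mu : ι → ℝ)
    (h0 : ∀ i ∈ N, 0 ≤ ml i) (h1 : ∀ i ∈ N, ml i ≤ mu i)
    (hpos : 0 < ∑ i ∈ N, (ml i) ^ 2) :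
    ∀ S : Finset ι, S ⊆ N →
      (∑ j ∈ S, 2 * a * (ml j) ^ 2 / Real.sqrt (∑ i ∈ N, (ml i) ^ 2)
        ≤ 2 * a * Real.sqrt (∑ j ∈ S, (ml j) ^ 2)) ∧
      (∑ j ∈ S, 2 * a * (mu j) ^ 2 / Real.sqrt (∑ i ∈ N, (mu i) ^ 2)
        ≤ 2 * a * Real.sqrt (∑ j ∈ S, (mu j) ^ 2)) := by
  intro S hS
  have h2a : (0:ℝ) ≤ 2 * a := by linarith
  have hposu : 0 < ∑ i ∈ N, (mu i) ^ 2 := by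
    refine lt_of_lt_of_le hpos (Finset.sum_le_sum fun i hi => ?_)
    exact pow_le_pow_left₀ (h0 i hi) (h1 i hi) 2
  constructor
  · have := aux_soc N S hS ml hpos
    calc ∑ j ∈ S, 2 * a * (ml j) ^ 2 / Real.sqrt (∑ i ∈ N, (ml i) ^ 2)
        = 2 * a * ((∑ j ∈ S, (ml j) ^ 2) / Real.sqrt (∑ i ∈ N, (ml i) ^ 2)) := by
          rw [Finset.sum_div, Finset.mul_sum]; congr 1; ext j; ring
      _ ≤ 2 * a * Real.sqrt (∑ j ∈ S, (ml j) ^ 2) :=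
          mul_le_mul_of_nonneg_left this h2a
  · have := aux_soc N S hS mu hposu
    calc ∑ j ∈ S, 2 * a * (mu j) ^ 2 / Real.sqrt (∑ i ∈ N, (mu i) ^ 2)
        = 2 * a * ((∑ j ∈ S, (mu j) ^ 2) / Real.sqrt (∑ i ∈ N, (mu i) ^ 2)) := by
          rw [Finset.sum_div, Finset.mul_sum]; congr 1; ext j; ring
      _ ≤ 2 * a * Real.sqrt (∑ j ∈ S, (mu j) ^ 2) :=
          mul_le_mul_of_nonneg_left this h2a
end

section
/- Fix a finite set N and a > 0. Consider rules Ψ assigning to every interval inventory situation (families {m̲_i, m̅_i}_{i∈N} with 0 ≤ m̲_i ≤ m̅_i) a pair of real allocations (Ψ̲_j, Ψ̅_j)_{j∈N} such that Σ_{j∈N} Ψ̲_j = 2a·√(Σ_{i∈N} m̲_i²) and Σ_{j∈N} Ψ̅_j = 2a·√(Σ_{i∈N} m̅_i²). If Ψ satisfies Inactive Agent Exemption (whenever m̲_j = m̅_j = 0 then Ψ̲_j = Ψ̅_j = 0) and Transfer-Based Additivity (for any two situations m, m̂ and every j ∈ N, √(Σ_{i∈N}(m̲_i² + m̲̂_i²))·Ψ̲_j(√(m²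 + m̂²)) = √(Σ_{i∈N} m̲_i²)·Ψ̲_j(m) + √(Σ_{i∈N} m̲̂_i²)·Ψ̲_j(m̂), and the analogous identity for upper endpoints, where √(m² + m̂²) denotes the situation with components [√(m̲_i² + m̲̂_i²), √(m̅_i² + m̂̅_i²)]), then Ψ coincides with the interval SOC-rule: for every situation with Σ_{i∈N} m̲_i² > 0 and every j ∈ N, Ψ̲_j = 2a·m̲_j²/√(Σ_{i∈N} m̲_i²) and Ψ̅_j = 2a·m̅_j²/√(Σ_{i∈N} m̅_i²). Conversely, the interval SOC-rule satisfies both properties. -/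
open Real

variable {ι : Type*}

/-- An interval inventory situation on `N`: each agent `i ∈ N` has an interval
`[ml i, mu i]` of nonnegative reals. -/
def IsIntervalSituation (N : Finset ι) (ml mu : ι → ℝ) : Prop :=
  ∀ i ∈ N, 0 ≤ ml i ∧ ml i ≤ mu i

/-- A rule (assigning to each situation and each agent a pair: lower and upper endpoint
of the allocated interval) is an interval allocation rule if on every situation the
allocations sum, endpointwise, to the total interval cost `2a·√(∑_{i∈N} mᵢ²)`. -/
def IsIntervalAllocationRule (N : Finset ι) (a : ℝ)
    (Ψ : (ι → ℝ) → (ι → ℝ) → ι → ℝ × ℝ) : Prop :=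
  ∀ ml mu : ι → ℝ, IsIntervalSituation N ml mu →
    (∑ j ∈ N, (Ψ ml mu j).1 = 2 * a * Real.sqrt (∑ i ∈ N, (ml i) ^ 2)) ∧
    (∑ j ∈ N, (Ψ ml mu j).2 = 2 * a * Real.sqrt (∑ i ∈ N, (mu i) ^ 2))

/-- Inactive Agent Exemption: an agent with interval `[0,0]` is allocated `[0,0]`. -/
def SatisfiesIAE (N : Finset ι) (Ψ : (ι → ℝ) → (ι → ℝ) → ι → ℝ × ℝ) : Prop :=
  ∀ ml mu : ι → ℝ, IsIntervalSituation N ml mu →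
    ∀ j ∈ N, ml j = 0 → mu j = 0 → Ψ ml mu j = (0, 0)

/-- Transfer-Based Additivity: for any two situations `m`, `m̂` and every agent `j`,
`√(∑ᵢ(mᵢ² + m̂ᵢ²)) · Ψⱼ(√(m² + m̂²)) = √(∑ᵢ mᵢ²) · Ψⱼ(m) + √(∑ᵢ m̂ᵢ²) · Ψⱼ(m̂)`,
endpointwise, where `√(m² + m̂²)` is the situation with components
`[√(m̲ᵢ² + m̲̂ᵢ²), √(m̅ᵢ² + m̂̅ᵢ²)]`. -/
def SatisfiesTBA (N : Finset ι) (Ψ : (ι → ℝ) → (ι → ℝ) → ι → ℝ × ℝ) : Prop :=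
  ∀ ml mu nl nu : ι → ℝ, IsIntervalSituation N ml mu → IsIntervalSituation N nl nu →
    ∀ j ∈ N,
      (Real.sqrt (∑ i ∈ N, ((ml i) ^ 2 + (nl i) ^ 2)) *
          (Ψ (fun i => Real.sqrt ((ml i) ^ 2 + (nl i) ^ 2))
             (fun i => Real.sqrt ((mu i) ^ 2 + (nu i) ^ 2)) j).1
        = Real.sqrt (∑ i ∈ N, (ml i) ^ 2) * (Ψ ml mu j).1
          + Real.sqrt (∑ i ∈ N, (nl i) ^ 2) * (Ψ nl nu j).1) ∧
      (Real.sqrt (∑ i ∈ N, ((mu i) ^ 2 + (nu i) ^ 2)) *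
          (Ψ (fun i => Real.sqrt ((ml i) ^ 2 + (nl i) ^ 2))
             (fun i => Real.sqrt ((mu i) ^ 2 + (nu i) ^ 2)) j).2
        = Real.sqrt (∑ i ∈ N, (mu i) ^ 2) * (Ψ ml mu j).2
          + Real.sqrt (∑ i ∈ N, (nu i) ^ 2) * (Ψ nl nu j).2)

/-- The interval SOC-rule: agent `j` gets the interval with endpoints
`2a·m̲ⱼ²/√(∑_{i∈N} m̲ᵢ²)` and `2a·m̅ⱼ²/√(∑_{i∈N} m̅ᵢ²)`. -/
noncomputable def intervalSOC (N : Finset ι) (a : ℝ)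
    (ml mu : ι → ℝ) (j : ι) : ℝ × ℝ :=
  (2 * a * (ml j) ^ 2 / Real.sqrt (∑ i ∈ N, (ml i) ^ 2),
   2 * a * (mu j) ^ 2 / Real.sqrt (∑ i ∈ N, (mu i) ^ 2))

/-! ### Auxiliary definitions and lemmas -/

noncomputable def SOCpad [DecidableEq ι] (N S : Finset ι) (f : ι → ℝ) : ι → ℝ :=
  fun i => if i ∈ S then f i else if i ∈ N then 0 else |f i|

def SOCsing [DecidableEq ι] (k : ι) (c : ℝ) : ι → ℝ := fun i => if i = k then c else 0

lemma SOC_sqrt_cancel (a c s : ℝ) (hc : 0 ≤ c) (hcs : c ≤ s) :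
    Real.sqrt s * (2 * a * c / Real.sqrt s) = 2 * a * c := by
  rcases eq_or_lt_of_le (hc.trans hcs) with h | h
  · have : c = 0 := le_antisymm (h ▸ hcs) hc
    simp [this]
  · have hs : Real.sqrt s ≠ 0 := (Real.sqrt_pos.2 h).ne'
    field_simp

lemma SOC_pad_sit [DecidableEq ι] {N : Finset ι} (S : Finset ι) {ml mu : ι → ℝ}
    (h : IsIntervalSituation N ml mu) :
    IsIntervalSituation N (SOCpad N S ml) (SOCpad N S mu) := by
  intro i hi
  unfold SOCpad
  by_cases hiS : i ∈ S
  · simpa [hiS] using h i hi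
  · simp [hiS, hi]

lemma SOC_sing_sit [DecidableEq ι] {N : Finset ι} {k : ι} {c d : ℝ}
    (hc : 0 ≤ c) (hcd : c ≤ d) :
    IsIntervalSituation N (SOCsing k c) (SOCsing k d) := by
  intro i _
  unfold SOCsing
  by_cases h : i = k <;> simp [h, hc, hcd]

lemma SOC_sing_sum [DecidableEq ι] {N : Finset ι} {k : ι} (hk : k ∈ N) (c : ℝ) :
    ∑ i ∈ N, (SOCsing k c i) ^ 2 = c ^ 2 := by
  rw [Finset.sum_eq_single_of_mem k hk]
  · simp [SOCsing]
  · intro b _ hb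
    simp [SOCsing, hb]

lemma SOC_psi_single [DecidableEq ι] {N : Finset ι} {a : ℝ}
    {Ψ : (ι → ℝ) → (ι → ℝ) → ι → ℝ × ℝ}
    (hA : IsIntervalAllocationRule N a Ψ) (hI : SatisfiesIAE N Ψ)
    {k : ι} (hk : k ∈ N) {c d : ℝ} (hc : 0 ≤ c) (hcd : c ≤ d) :
    ∀ j ∈ N, Ψ (SOCsing k c) (SOCsing k d) j =
      (if j = k then 2 * a * c else 0, if j = k then 2 * a * d else 0) := by
  have hsit : IsIntervalSituation N (SOCsing k c) (SOCsing k d) := SOC_sing_sit hc hcd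
  have hzero : ∀ b ∈ N, b ≠ k → Ψ (SOCsing k c) (SOCsing k d) b = (0, 0) := by
    intro b hb hbk
    exact hI _ _ hsit b hb (by simp [SOCsing, hbk]) (by simp [SOCsing, hbk])
  intro j hj
  by_cases hjk : j = k
  · subst hjk
    obtain ⟨h1, h2⟩ := hA _ _ hsit
    rw [Finset.sum_eq_single_of_mem j hj (fun b hb hbj => by rw [hzero b hb hbj])] at h1 h2
    rw [SOC_sing_sum hj c, Real.sqrt_sq hc] at h1
    rw [SOC_sing_sum hj d, Real.sqrt_sq (hc.trans hcd)] at h2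
    simp only [if_pos rfl]
    exact Prod.ext_iff.mpr ⟨h1, h2⟩
  · rw [hzero j hj hjk]
    simp [hjk]

lemma SOC_psi_pad [DecidableEq ι] {N : Finset ι} {a : ℝ}
    {Ψ : (ι → ℝ) → (ι → ℝ) → ι → ℝ × ℝ}
    (hA : IsIntervalAllocationRule N a Ψ) (hI : SatisfiesIAE N Ψ)
    (hT : SatisfiesTBA N Ψ)
    {ml mu : ι → ℝ} (hsit : IsIntervalSituation N ml mu) :
    ∀ S : Finset ι, S ⊆ N → ∀ j ∈ N,
      (Real.sqrt (∑ i ∈ N, (SOCpad N S ml i) ^ 2) * (Ψ (SOCpad N S ml) (SOCpad N S mu) j).1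
        = if j ∈ S then 2 * a * (ml j) ^ 2 else 0) ∧
      (Real.sqrt (∑ i ∈ N, (SOCpad N S mu i) ^ 2) * (Ψ (SOCpad N S ml) (SOCpad N S mu) j).2
        = if j ∈ S then 2 * a * (mu j) ^ 2 else 0) := by
  intro S
  induction S using Finset.induction_on with
  | empty =>
      intro _ j hj
      have hsl : ∑ i ∈ N, (SOCpad N ∅ ml i) ^ 2 = 0 :=
        Finset.sum_eq_zero (fun i hi => by simp [SOCpad, hi])
      have hsu : ∑ i ∈ N, (SOCpad N ∅ mu i) ^ 2 = 0 :=
        Finset.sum_eq_zero (fun i hi => by simp [SOCpad, hi])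
      simp [hsl, hsu]
  | @insert k S hkS ih =>
      intro hsub j hj
      have hkN : k ∈ N := hsub (Finset.mem_insert_self k S)
      have hSN : S ⊆ N := fun x hx => hsub (Finset.mem_insert_of_mem hx)
      obtain ⟨hmlk, hmluk⟩ := hsit k hkN
      have hsitS : IsIntervalSituation N (SOCpad N S ml) (SOCpad N S mu) :=
        SOC_pad_sit S hsit
      have hsitE : IsIntervalSituation N (SOCsing k (ml k)) (SOCsing k (mu k)) :=
        SOC_sing_sit hmlk hmluk
      obtain ⟨h1, h2⟩ := hT (SOCsing k (ml k)) (SOCsing k (mu k))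
        (SOCpad N S ml) (SOCpad N S mu) hsitE hsitS j hj
      have padval : ∀ (f : ι → ℝ), (∀ i ∈ N, 0 ≤ f i) →
          ((fun i => Real.sqrt ((SOCsing k (f k) i) ^ 2 + (SOCpad N S f i) ^ 2))
            = SOCpad N (insert k S) f) := by
        intro f hf
        funext i
        by_cases hik : i = k
        · have e1 : SOCsing k (f k) i = f i := by simp [SOCsing, hik]
          have e2 : SOCpad N S f i = 0 := by
            rw [hik]; simp [SOCpad, hkS, hkN]
          have e3 : SOCpad N (insert k S) f i = f i := by simp [SOCpad, hik]
          rw [e1, e2, e3, show ((0:ℝ))^2 = 0 by norm_num, add_zero,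
            Real.sqrt_sq (hik ▸ hf k hkN)]
        · have e1 : SOCsing k (f k) i = 0 := by simp [SOCsing, hik]
          rw [e1, show ((0:ℝ))^2 = 0 by norm_num, zero_add]
          by_cases hiS : i ∈ S
          · have e2 : SOCpad N S f i = f i := by simp [SOCpad, hiS]
            have e3 : SOCpad N (insert k S) f i = f i := by
              simp [SOCpad, Finset.mem_insert, hiS]
            rw [e2, e3, Real.sqrt_sq (hf i (hSN hiS))]
          · have e2 : SOCpad N S f i = SOCpad N (insert k S) f i := by
              simp [SOCpad, Finset.mem_insert, hik, hiS]
            rw [← e2]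
            by_cases hiN : i ∈ N
            · have e3 : SOCpad N S f i = 0 := by simp [SOCpad, hiS, hiN]
              rw [e3]; simp
            · have e3 : SOCpad N S f i = |f i| := by simp [SOCpad, hiS, hiN]
              rw [e3, Real.sqrt_sq_eq_abs, abs_abs]
      have padsum : ∀ f : ι → ℝ,
          ∑ i ∈ N, ((SOCsing k (f k) i) ^ 2 + (SOCpad N S f i) ^ 2)
            = ∑ i ∈ N, (SOCpad N (insert k S) f i) ^ 2 := by
        intro f
        refine Finset.sum_congr rfl (fun i hi => ?_)
        by_cases hik : i = k
        · subst hik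
          simp [SOCsing, SOCpad, hkS, hi]
        · by_cases hiS : i ∈ S <;> simp [SOCsing, SOCpad, hik, hiS, hi]
      have hmlN : ∀ i ∈ N, 0 ≤ ml i := fun i hi => (hsit i hi).1
      have hmuN : ∀ i ∈ N, 0 ≤ mu i := fun i hi => (hmlN i hi).trans (hsit i hi).2
      rw [padval ml hmlN, padval mu hmuN] at h1 h2
      rw [padsum ml, SOC_sing_sum hkN (ml k), Real.sqrt_sq hmlk] at h1
      rw [padsum mu, SOC_sing_sum hkN (mu k), Real.sqrt_sq (hmlk.trans hmluk)] at h2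
      have hv := SOC_psi_single hA hI hkN hmlk hmluk j hj
      have hv1 : (Ψ (SOCsing k (ml k)) (SOCsing k (mu k)) j).1
          = if j = k then 2 * a * ml k else 0 := by rw [hv]
      have hv2 : (Ψ (SOCsing k (ml k)) (SOCsing k (mu k)) j).2
          = if j = k then 2 * a * mu k else 0 := by rw [hv]
      obtain ⟨ih1, ih2⟩ := ih hSN j hj
      constructor
      · rw [h1, ih1, hv1]
        by_cases hjk : j = k
        · subst hjk
          rw [if_pos rfl, if_neg hkS, if_pos (Finset.mem_insert_self j S)]
          ring
        · simp [hjk, Finset.mem_insert]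
      · rw [h2, ih2, hv2]
        by_cases hjk : j = k
        · subst hjk
          rw [if_pos rfl, if_neg hkS, if_pos (Finset.mem_insert_self j S)]
          ring
        · simp [hjk, Finset.mem_insert]

/-- The interval SOC-rule is the unique interval allocation rule for interval inventory
situations satisfying Inactive Agent Exemption and Transfer-Based Additivity: any
interval allocation rule with IAE and TBA coincides with the interval SOC-rule on every
situation with `∑_{i∈N} m̲ᵢ² > 0`; conversely, the interval SOC-rule satisfies both
properties. -/
theorem interval_soc_characterization [DecidableEq ι] (N : Finset ι)
    (a : ℝ) (ha : 0 < a) :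
    (∀ Ψ : (ι → ℝ) → (ι → ℝ) → ι → ℝ × ℝ,
      IsIntervalAllocationRule N a Ψ → SatisfiesIAE N Ψ → SatisfiesTBA N Ψ →
      ∀ ml mu : ι → ℝ, IsIntervalSituation N ml mu → 0 < ∑ i ∈ N, (ml i) ^ 2 →
        ∀ j ∈ N, Ψ ml mu j = intervalSOC N a ml mu j) ∧
    SatisfiesIAE N (intervalSOC N a) ∧ SatisfiesTBA N (intervalSOC N a) := by
  refine ⟨?_, ?_, ?_⟩
  · -- uniqueness
    intro Ψ hA hI hT ml mu hsit hpos j hj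
    have hmlN : ∀ i ∈ N, 0 ≤ ml i := fun i hi => (hsit i hi).1
    have hmuN : ∀ i ∈ N, 0 ≤ mu i := fun i hi => (hmlN i hi).trans (hsit i hi).2
    have hposu : 0 < ∑ i ∈ N, (mu i) ^ 2 :=
      lt_of_lt_of_le hpos (Finset.sum_le_sum fun i hi =>
        pow_le_pow_left₀ (hmlN i hi) (hsit i hi).2 2)
    set z : ι → ℝ := fun _ => 0 with hz
    have hzsit : IsIntervalSituation N z z := by intro i _; simp [hz]
    obtain ⟨h1, h2⟩ := hT ml mu z z hsit hzsit j hj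
    have g1 : (fun i => Real.sqrt ((ml i) ^ 2 + (z i) ^ 2)) = SOCpad N N ml := by
      funext i
      by_cases hiN : i ∈ N
      · simp [hz, SOCpad, hiN, Real.sqrt_sq (hmlN i hiN)]
      · simp [hz, SOCpad, hiN, Real.sqrt_sq_eq_abs]
    have g2 : (fun i => Real.sqrt ((mu i) ^ 2 + (z i) ^ 2)) = SOCpad N N mu := by
      funext i
      by_cases hiN : i ∈ N
      · simp [hz, SOCpad, hiN, Real.sqrt_sq (hmuN i hiN)]
      · simp [hz, SOCpad, hiN, Real.sqrt_sq_eq_abs]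
    have gs1 : ∑ i ∈ N, ((ml i) ^ 2 + (z i) ^ 2) = ∑ i ∈ N, (ml i) ^ 2 := by simp [hz]
    have gs2 : ∑ i ∈ N, ((mu i) ^ 2 + (z i) ^ 2) = ∑ i ∈ N, (mu i) ^ 2 := by simp [hz]
    have gz : Real.sqrt (∑ i ∈ N, (z i) ^ 2) = 0 := by simp [hz]
    rw [g1, g2, gs1, gz, zero_mul, add_zero] at h1
    rw [g1, g2, gs2, gz, zero_mul, add_zero] at h2
    obtain ⟨c1, c2⟩ := SOC_psi_pad hA hI hT hsit N Finset.Subset.rfl j hj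
    rw [if_pos hj] at c1 c2
    have ps1 : ∑ i ∈ N, (SOCpad N N ml i) ^ 2 = ∑ i ∈ N, (ml i) ^ 2 :=
      Finset.sum_congr rfl fun i hi => by simp [SOCpad, hi]
    have ps2 : ∑ i ∈ N, (SOCpad N N mu i) ^ 2 = ∑ i ∈ N, (mu i) ^ 2 :=
      Finset.sum_congr rfl fun i hi => by simp [SOCpad, hi]
    rw [ps1] at c1
    rw [ps2] at c2
    have hSl : Real.sqrt (∑ i ∈ N, (ml i) ^ 2) ≠ 0 := (Real.sqrt_pos.2 hpos).ne'
    have hSu : Real.sqrt (∑ i ∈ N, (mu i) ^ 2) ≠ 0 := (Real.sqrt_pos.2 hposu).ne'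
    have e1 : (Ψ ml mu j).1
        = 2 * a * (ml j) ^ 2 / Real.sqrt (∑ i ∈ N, (ml i) ^ 2) := by
      rw [eq_div_iff hSl, mul_comm, ← h1, c1]
    have e2 : (Ψ ml mu j).2
        = 2 * a * (mu j) ^ 2 / Real.sqrt (∑ i ∈ N, (mu i) ^ 2) := by
      rw [eq_div_iff hSu, mul_comm, ← h2, c2]
    exact Prod.ext_iff.mpr ⟨e1, e2⟩
  · -- IAE
    intro ml mu hsit j hj h0l h0u
    simp [intervalSOC, h0l, h0u]
  · -- TBA
    intro ml mu nl nu hm hn j hj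
    have r1 : ∀ x y : ℝ, Real.sqrt (x ^ 2 + y ^ 2) ^ 2 = x ^ 2 + y ^ 2 :=
      fun x y => Real.sq_sqrt (by positivity)
    constructor
    · simp only [intervalSOC, r1]
      rw [SOC_sqrt_cancel a _ _ (by positivity)
          (Finset.single_le_sum (f := fun i => (ml i) ^ 2 + (nl i) ^ 2)
            (fun i _ => by positivity) hj),
        SOC_sqrt_cancel a _ _ (by positivity)
          (Finset.single_le_sum (f := fun i => (ml i) ^ 2)
            (fun i _ => by positivity) hj),
        SOC_sqrt_cancel a _ _ (by positivity)
          (Finset.single_le_sum (f := fun i => (nl i) ^ 2)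
            (fun i _ => by positivity) hj)]
      ring
    · simp only [intervalSOC, r1]
      rw [SOC_sqrt_cancel a _ _ (by positivity)
          (Finset.single_le_sum (f := fun i => (mu i) ^ 2 + (nu i) ^ 2)
            (fun i _ => by positivity) hj),
        SOC_sqrt_cancel a _ _ (by positivity)
          (Finset.single_le_sum (f := fun i => (mu i) ^ 2)
            (fun i _ => by positivity) hj),
        SOC_sqrt_cancel a _ _ (by positivity)
          (Finset.single_le_sum (f := fun i => (nu i) ^ 2)
            (fun i _ => by positivity) hj)]
      ring
end

section
/- Fix a finite set N with |N| ≥ 2 and a > 0. Define the rule Ψ on interval inventory situations by: Ψ_j = [0,0] if m̲_j = m̅_j = 0, and otherwise Ψ_j is the equal split [2a·√(Σ_{i∈N} m̲_i²)/k, 2a·√(Σ_{i∈N} m̅_i²)/k] where k is the number of agents with m_i ≠ [0,0]. Then Ψ is an interval allocation rule satisfying Inactive Agent Exemption, but Ψ does not satisfy Transfer-Based Additivity: there exist situations m, m̂ and an agent j for which the Transfer-Based Additivity identity fails. -/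
open scoped Classical

variable {ι : Type*}

/-- The equal-split rule among active agents: an inactive agent (interval `[0,0]`)
gets `[0,0]`, while each active agent gets an equal share `1/k` of the total interval
cost, `k` being the number of active agents in `N`. -/
noncomputable def equalSplitRule (N : Finset ι) (a : ℝ)
    (ml mu : ι → ℝ) (j : ι) : ℝ × ℝ :=
  if ml j = 0 ∧ mu j = 0 then (0, 0)
  else
    (2 * a * Real.sqrt (∑ i ∈ N, (ml i) ^ 2)
        / (N.filter fun i => ¬(ml i = 0 ∧ mu i = 0)).card,
     2 * a * Real.sqrt (∑ i ∈ N, (mu i) ^ 2)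
        / (N.filter fun i => ¬(ml i = 0 ∧ mu i = 0)).card)

lemma eqsplit_sum_helper (N : Finset ι) (p : ι → Prop) [DecidablePred p]
    (c : ℝ) (hc : (∀ i ∈ N, p i) → c = 0) :
    ∑ j ∈ N, (if p j then 0 else c / (N.filter fun i => ¬ p i).card) = c := by
  classical
  set k := (N.filter fun i => ¬ p i).card with hk
  have h1 : ∑ j ∈ N, (if p j then (0:ℝ) else c / k)
      = ∑ j ∈ N.filter (fun i => ¬ p i), c / k := by
    rw [Finset.sum_filter]
    refine Finset.sum_congr rfl fun j _ => ?_
    by_cases h : p j <;> simp [h]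
  rw [h1, Finset.sum_const, ← hk]
  by_cases hk0 : k = 0
  · have hemp : N.filter (fun i => ¬ p i) = ∅ := Finset.card_eq_zero.mp hk0
    have hc0 : c = 0 := hc fun i hi => by
      by_contra h
      exact absurd hemp (Finset.ne_empty_of_mem (Finset.mem_filter.mpr ⟨hi, h⟩))
    simp [hc0]
  · rw [nsmul_eq_mul]
    field_simp

/-- On a player set `N` with at least two agents, the equal-split rule is an interval
allocation rule satisfying Inactive Agent Exemption, but it fails Transfer-Based
Additivity: there are two situations and an agent of `N` for which the TBA identity
fails. -/
theorem equal_split_IAE_not_TBA [DecidableEq ι] (N : Finset ι) (hN : 2 ≤ N.card)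
    (a : ℝ) (ha : 0 < a) :
    IsIntervalAllocationRule N a (equalSplitRule N a) ∧
    SatisfiesIAE N (equalSplitRule N a) ∧
    ¬ SatisfiesTBA N (equalSplitRule N a) := by
  refine ⟨?_, ?_, ?_⟩
  · -- interval allocation rule
    intro ml mu hs
    constructor
    · have key := eqsplit_sum_helper N (fun i => ml i = 0 ∧ mu i = 0)
        (2 * a * Real.sqrt (∑ i ∈ N, (ml i) ^ 2)) (fun h => by
          have : ∑ i ∈ N, (ml i) ^ 2 = 0 :=
            Finset.sum_eq_zero fun i hi => by rw [(h i hi).1]; ring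
          simp [this])
      rw [← key]
      refine Finset.sum_congr rfl fun j _ => ?_
      unfold equalSplitRule
      by_cases h : ml j = 0 ∧ mu j = 0 <;> simp [h]
    · have key := eqsplit_sum_helper N (fun i => ml i = 0 ∧ mu i = 0)
        (2 * a * Real.sqrt (∑ i ∈ N, (mu i) ^ 2)) (fun h => by
          have : ∑ i ∈ N, (mu i) ^ 2 = 0 :=
            Finset.sum_eq_zero fun i hi => by rw [(h i hi).2]; ring
          simp [this])
      rw [← key]
      refine Finset.sum_congr rfl fun j _ => ?_
      unfold equalSplitRule
      by_cases h : ml j = 0 ∧ mu j = 0 <;> simp [h]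
  · -- IAE
    intro ml mu _ j _ h1 h2
    unfold equalSplitRule
    rw [if_pos ⟨h1, h2⟩]
  · -- not TBA
    intro hTBA
    obtain ⟨j, hj, k, hk, hjk⟩ := Finset.one_lt_card.mp hN
    set ml : ι → ℝ := fun i => if i = j then 1 else 0 with hml
    set nl : ι → ℝ := fun i => if i = j ∨ i = k then 1 else 0 with hnl
    have hs1 : IsIntervalSituation N ml ml := fun i _ => by
      by_cases h : i = j <;> simp [hml, h]
    have hs2 : IsIntervalSituation N nl nl := fun i _ => by
      by_cases h : i = j ∨ i = k <;> simp [hnl, h]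
    have hS1 : ∑ i ∈ N, (ml i) ^ 2 = 1 := by
      have e : ∀ i ∈ N, (ml i) ^ 2 = if i = j then 1 else 0 := fun i _ => by
        by_cases h : i = j <;> simp [hml, h]
      rw [Finset.sum_congr rfl e, Finset.sum_ite_eq' N j (fun _ => (1:ℝ))]
      simp [hj]
    have hS2 : ∑ i ∈ N, (nl i) ^ 2 = 2 := by
      have e : ∀ i ∈ N, (nl i) ^ 2 = (if i = j then 1 else 0) + (if i = k then 1 else 0) :=
        fun i _ => by
          by_cases h1 : i = j
          · subst h1; simp [hnl, hjk]
          · by_cases h2 : i = k <;> simp [hnl, h1, h2, Ne.symm hjk]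
      rw [Finset.sum_congr rfl e, Finset.sum_add_distrib,
        Finset.sum_ite_eq' N j (fun _ => (1:ℝ)), Finset.sum_ite_eq' N k (fun _ => (1:ℝ))]
      simp [hj, hk]
      norm_num
    set c : ι → ℝ := fun i => Real.sqrt ((ml i) ^ 2 + (nl i) ^ 2) with hc
    have hcj : c j = Real.sqrt 2 := by simp [hc, hml, hnl]; norm_num
    have hck : c k = 1 := by simp [hc, hml, hnl, hjk, Ne.symm hjk]
    have hc0 : ∀ i, i ≠ j → i ≠ k → c i = 0 := fun i h1 h2 => by
      simp [hc, hml, hnl, h1, h2]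
    have hSc : ∑ i ∈ N, (c i) ^ 2 = 3 := by
      have e : ∀ i ∈ N, (c i) ^ 2 = (ml i) ^ 2 + (nl i) ^ 2 := fun i _ =>
        Real.sq_sqrt (by positivity)
      rw [Finset.sum_congr rfl e, Finset.sum_add_distrib, hS1, hS2]
      norm_num
    have hFm : N.filter (fun i => ¬(ml i = 0 ∧ ml i = 0)) = {j} := by
      ext i; by_cases h : i = j <;> simp [hml, h, hj]
    have hFn : N.filter (fun i => ¬(nl i = 0 ∧ nl i = 0)) = {j, k} := by
      ext i
      by_cases h1 : i = j
      · subst h1; simp [hnl, hj]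
      · by_cases h2 : i = k
        · subst h2; simp [hnl, hk, h1]
        · simp [hnl, h1, h2]
    have hFc : N.filter (fun i => ¬(c i = 0 ∧ c i = 0)) = {j, k} := by
      ext i
      by_cases h1 : i = j
      · subst h1
        simp [hcj, hj, Real.sqrt_eq_zero']
      · by_cases h2 : i = k
        · subst h2; simp [hck, hk, h1]
        · simp [hc0 i h1 h2, h1, h2]
    have E1 : (equalSplitRule N a ml ml j).1 = 2 * a := by
      unfold equalSplitRule
      rw [if_neg (by simp [hml]), hFm, hS1]
      simp
    have E2 : (equalSplitRule N a nl nl j).1 = 2 * a * Real.sqrt 2 / 2 := by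
      unfold equalSplitRule
      rw [if_neg (by simp [hnl]), hFn, hS2, Finset.card_pair hjk]
      norm_num
    have E3 : (equalSplitRule N a c c j).1 = 2 * a * Real.sqrt 3 / 2 := by
      unfold equalSplitRule
      rw [if_neg (by rw [hcj]; intro h; exact absurd h.1 (by positivity)), hFc, hSc,
        Finset.card_pair hjk]
      norm_num
    have h := (hTBA ml ml nl nl hs1 hs2 j hj).1
    have hsum : ∑ i ∈ N, ((ml i) ^ 2 + (nl i) ^ 2) = 3 := by
      rw [Finset.sum_add_distrib, hS1, hS2]; norm_num
    rw [hsum, hS1, hS2, ← hc, E1, E2, E3, Real.sqrt_one, one_mul] at h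
    have s3 : Real.sqrt 3 * Real.sqrt 3 = 3 := Real.mul_self_sqrt (by norm_num)
    have s2 : Real.sqrt 2 * Real.sqrt 2 = 2 := Real.mul_self_sqrt (by norm_num)
    nlinarith [h, s2, s3, ha]
end

section
/- Let N be a finite set with |N| = n ≥ 2 and let c be a function from subsets of N to ℝ with c(∅) = 0. For a nonempty subset T ⊆ N let c|_T denote the restriction of c to subsets of T, and define the Shapley value φ_i(T, c|_T) = Σ_{S ⊆ T \ {i}} (|S|!·(|T| − |S| − 1)!/|T|!) · (c(S ∪ {i}) − c(S)). Then the Shapley value satisfies balanced contributions: for all distinct i, j ∈ N, φ_i(N, c) − φ_i(N \ {j}, c|_{N\{j}}) = φ_j(N, c) − φ_j(N \ {i}, c|_{N\{i}}). -/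
/-- The Shapley value of player `i` in the cost game with player set `T` and
characteristic function `c`:
`φ_i(T, c) = ∑_{S ⊆ T \ {i}} (|S|!·(|T| − |S| − 1)!/|T|!)·(c(S ∪ {i}) − c(S))`. -/
noncomputable def shapley {ι : Type*} [DecidableEq ι]
    (T : Finset ι) (c : Finset ι → ℝ) (i : ι) : ℝ :=
  ∑ S ∈ (T.erase i).powerset,
    ((S.card.factorial * (T.card - S.card - 1).factorial : ℕ) : ℝ) / (T.card.factorial : ℝ)
      * (c (insert i S) - c S)

noncomputable def potential {ι : Type*} [DecidableEq ι]
    (T : Finset ι) (c : Finset ι → ℝ) : ℝ :=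
  ∑ S ∈ T.powerset,
    (((S.card - 1).factorial * (T.card - S.card).factorial : ℕ) : ℝ) / (T.card.factorial : ℝ)
      * c S

lemma shapley_eq_pot {ι : Type*} [DecidableEq ι]
    (T : Finset ι) (c : Finset ι → ℝ) (hc : c ∅ = 0) (i : ι) (hi : i ∈ T) :
    shapley T c i = potential T c - potential (T.erase i) c := by
  have hins : T = insert i (T.erase i) := (Finset.insert_erase hi).symm
  have hcard : (T.erase i).card = T.card - 1 := Finset.card_erase_of_mem hi
  have hnotmem : i ∉ T.erase i := Finset.notMem_erase i T
  have hsplit : potential T c =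
      (∑ S ∈ (T.erase i).powerset,
        (((S.card - 1).factorial * (T.card - S.card).factorial : ℕ) : ℝ) / (T.card.factorial : ℝ) * c S)
      + ∑ S ∈ (T.erase i).powerset,
        ((((insert i S).card - 1).factorial * (T.card - (insert i S).card).factorial : ℕ) : ℝ)
          / (T.card.factorial : ℝ) * c (insert i S) := by
    rw [potential, hins, Finset.powerset_insert, Finset.sum_union, Finset.sum_image]
    · rw [← hins]
    · intro x hx y hy hxy
      have hx' : i ∉ x := fun h => hnotmem ((Finset.mem_powerset.mp hx) h)
      have hy' : i ∉ y := fun h => hnotmem ((Finset.mem_powerset.mp hy) h)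
      have := congrArg (Finset.erase · i) hxy
      simpa [Finset.erase_insert, hx', hy'] using this
    · rw [Finset.disjoint_left]
      intro S hS hS'
      obtain ⟨x, hx, rfl⟩ := Finset.mem_image.mp hS'
      exact hnotmem ((Finset.mem_powerset.mp hS) (Finset.mem_insert_self i x))
  rw [eq_sub_iff_add_eq, hsplit, shapley, potential, ← Finset.sum_add_distrib,
    ← Finset.sum_add_distrib]
  apply Finset.sum_congr rfl
  intro S hS
  have hiS : i ∉ S := fun h => hnotmem ((Finset.mem_powerset.mp hS) h)
  have hcardins : (insert i S).card = S.card + 1 := Finset.card_insert_of_notMem hiS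
  have hle : S.card + 1 ≤ T.card := by
    have h := Finset.card_lt_card
      ((Finset.mem_powerset.mp hS).trans_ssubset (Finset.erase_ssubset hi))
    omega
  rcases Finset.eq_empty_or_nonempty S with rfl | hne
  · simp [hc, hcardins]
  · obtain ⟨m, hm⟩ : ∃ m, S.card = m + 1 := ⟨S.card - 1, by have := Finset.card_pos.mpr hne; omega⟩
    obtain ⟨u, hu⟩ : ∃ u, T.card = m + 1 + 1 + u := ⟨T.card - S.card - 1, by omega⟩
    rw [hcardins, hcard, hm, hu]
    simp only [show m + 1 + 1 + u - (m + 1) - 1 = u from by omega,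
      show m + 1 - 1 = m from by omega,
      show m + 1 + 1 + u - (m + 1) = u + 1 from by omega,
      show m + 1 + 1 - 1 = m + 1 from by omega,
      show m + 1 + 1 + u - (m + 1 + 1) = u from by omega,
      show m + 1 + 1 + u - 1 - (m + 1) = u from by omega,
      show m + 1 + 1 + u - 1 = m + 1 + u from by omega,
      show m + 1 + u - (m + 1) = u from by omega,
      show u + 1 - 1 = u from by omega]
    have h1 : (m + 1).factorial = (m + 1) * m.factorial := Nat.factorial_succ m
    have h2 : (u + 1).factorial = (u + 1) * u.factorial := Nat.factorial_succ u
    have h3 : (m + 1 + 1 + u).factorial = (m + 1 + 1 + u) * (m + 1 + u).factorial := by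
      rw [show m + 1 + 1 + u = (m + 1 + u) + 1 from by ring, Nat.factorial_succ]
    rw [h1, h2, h3]
    have hm0 : (m.factorial : ℝ) ≠ 0 := Nat.cast_ne_zero.mpr m.factorial_ne_zero
    have hu0 : (u.factorial : ℝ) ≠ 0 := Nat.cast_ne_zero.mpr u.factorial_ne_zero
    have ht0 : ((m + 1 + u).factorial : ℝ) ≠ 0 := Nat.cast_ne_zero.mpr (m + 1 + u).factorial_ne_zero
    push_cast
    field_simp
    ring

/-- Balanced contributions property of the Shapley value: for a TU cost game `(N, c)`
with `|N| = n ≥ 2` and `c(∅) = 0`, and for all distinct players `i, j ∈ N`,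
`φ_i(N, c) − φ_i(N \ {j}, c|_{N\{j}}) = φ_j(N, c) − φ_j(N \ {i}, c|_{N\{i}})`
(the restriction of `c` to a subset is implicit, since the Shapley value on player set
`T` evaluates `c` only on subsets of `T`). -/
theorem shapley_balanced_contributions {ι : Type*} [DecidableEq ι]
    (N : Finset ι) (hN : 2 ≤ N.card) (c : Finset ι → ℝ) (hc : c ∅ = 0) :
    ∀ i ∈ N, ∀ j ∈ N, i ≠ j →
      shapley N c i - shapley (N.erase j) c i
        = shapley N c j - shapley (N.erase i) c j := by
  intro i hi j hj hij
  have hiNj : i ∈ N.erase j := Finset.mem_erase.mpr ⟨hij, hi⟩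
  have hjNi : j ∈ N.erase i := Finset.mem_erase.mpr ⟨hij.symm, hj⟩
  rw [shapley_eq_pot N c hc i hi, shapley_eq_pot N c hc j hj,
    shapley_eq_pot (N.erase j) c hc i hiNj, shapley_eq_pot (N.erase i) c hc j hjNi,
    Finset.erase_right_comm]
  ring
end

section
/- Let N be a finite set, a > 0, and for each i ∈ N let 0 ≤ m̲_i ≤ m̅_i. Define the border inventory games w̲(S) = 2a·√(Σ_{i∈S} m̲_i²) and w̅(S) = 2a·√(Σ_{i∈S} m̅_i²) for S ⊆ N, and let φ denote the Shapley value, φ_i(N, c) = Σ_{S ⊆ N \ {i}} (|S|!·(|N| − |S| − 1)!/|N|!)·(c(S ∪ {i}) − c(S)). Then the interval Shapley rule is Cross-Coalition Acceptable: for every coalition S ⊆ N, Σ_{j∈S} φ_j(N, w̲) ≤ w̲(S) and Σ_{j∈S} φ_j(N, w̅) ≤ w̅(S). -/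
open Finset


lemma sqrt_marg {x u v : ℝ} (hx : 0 ≤ x) (hu : 0 ≤ u) (huv : u ≤ v) :
    Real.sqrt (v + x) - Real.sqrt v ≤ Real.sqrt (u + x) - Real.sqrt u := by
  have hv : 0 ≤ v := hu.trans huv
  have h1 := Real.sq_sqrt hu
  have h2 := Real.sq_sqrt hv
  have h3 := Real.sq_sqrt (by linarith : (0:ℝ) ≤ u + x)
  have h4 := Real.sq_sqrt (by linarith : (0:ℝ) ≤ v + x)
  have n1 := Real.sqrt_nonneg u
  have n2 := Real.sqrt_nonneg v
  have n3 := Real.sqrt_nonneg (u + x)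
  have n4 := Real.sqrt_nonneg (v + x)
  have hqs : Real.sqrt v ≤ Real.sqrt (v + x) := Real.sqrt_le_sqrt (by linarith)
  have hpr : Real.sqrt u ≤ Real.sqrt (u + x) := Real.sqrt_le_sqrt (by linarith)
  have hpq : Real.sqrt u ≤ Real.sqrt v := Real.sqrt_le_sqrt huv
  have hrs : Real.sqrt (u + x) ≤ Real.sqrt (v + x) := Real.sqrt_le_sqrt (by linarith)
  nlinarith [mul_nonneg (sub_nonneg.2 hqs) (sub_nonneg.2 hpr),
    mul_nonneg (sub_nonneg.2 hrs) (sub_nonneg.2 hpq),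
    mul_nonneg (sub_nonneg.2 hpq) (sub_nonneg.2 hpr),
    sq_nonneg (Real.sqrt (v+x) - Real.sqrt (u+x) + Real.sqrt v - Real.sqrt u)]

lemma sum_swap_erase {ι : Type*} [DecidableEq ι] {S T : Finset ι} (hST : S ⊆ T) (f : ι → ι → ℝ) :
    ∑ j ∈ S, ∑ k ∈ T.erase j, f j k = ∑ k ∈ T, ∑ j ∈ S.erase k, f j k := by
  have hL : ∑ j ∈ S, ∑ k ∈ T.erase j, f j k
      = (∑ j ∈ S, ∑ k ∈ T, f j k) - ∑ j ∈ S, f j j := by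
    rw [← Finset.sum_sub_distrib]
    exact Finset.sum_congr rfl fun j hj => Finset.sum_erase_eq_sub (hST hj)
  have hR : ∑ k ∈ T, ∑ j ∈ S.erase k, f j k
      = (∑ k ∈ T, ∑ j ∈ S, f j k) - ∑ j ∈ S, f j j := by
    have : ∀ k ∈ T, ∑ j ∈ S.erase k, f j k
        = (∑ j ∈ S, f j k) - (if k ∈ S then f k k else 0) := by
      intro k hk
      by_cases h : k ∈ S
      · rw [Finset.sum_erase_eq_sub h, if_pos h]
      · rw [Finset.erase_eq_of_notMem h, if_neg h, sub_zero]
    rw [Finset.sum_congr rfl this, Finset.sum_sub_distrib]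
    congr 1
    rw [Finset.sum_ite_mem, Finset.inter_eq_right.2 hST]
  rw [hL, hR, Finset.sum_comm]

lemma shapley_rec {ι : Type*} [DecidableEq ι] (T : Finset ι) (c : Finset ι → ℝ) (j : ι)
    (hj : j ∈ T) :
    (T.card : ℝ) * shapley T c j
      = (c T - c (T.erase j)) + ∑ k ∈ T.erase j, shapley (T.erase k) c j := by
  classical
  set A := T.erase j with hA
  have hjA : j ∉ A := Finset.notMem_erase j T
  obtain ⟨a, ha⟩ : ∃ a, T.card = a + 1 :=
    Nat.exists_eq_add_of_lt (Finset.card_pos.2 ⟨j, hj⟩) |>.imp fun a h => by omega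
  have hAcard : A.card = a := by rw [hA, Finset.card_erase_of_mem hj, ha]; omega
  -- rewrite each inner shapley as sum over A.powerset with an ite
  have step1 : ∀ k ∈ A, shapley (T.erase k) c j
      = ∑ S ∈ A.powerset, (if k ∈ S then 0 else
          ((S.card.factorial * (a - S.card - 1).factorial : ℕ) : ℝ) / (a.factorial : ℝ)
            * (c (insert j S) - c S)) := by
    intro k hk
    have hkT : k ∈ T := Finset.mem_of_mem_erase hk
    have hkj : k ≠ j := Finset.ne_of_mem_erase hk
    have hcard : (T.erase k).card = a := by
      rw [Finset.card_erase_of_mem hkT, ha]; omega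
    have herase : (T.erase k).erase j = A.erase k := by
      ext x; simp only [Finset.mem_erase, hA]; tauto
    have hpow : (A.erase k).powerset = A.powerset.filter (fun S => k ∉ S) := by
      ext S
      simp [Finset.subset_erase, and_comm]
    rw [shapley, hcard, herase, hpow, Finset.sum_filter]
    exact Finset.sum_congr rfl fun S _ => by by_cases h : k ∈ S <;> simp [h]
  rw [Finset.sum_congr rfl step1, Finset.sum_comm]
  -- inner sum over k ∈ A of the ite
  have step2 : ∀ S ∈ A.powerset, ∑ k ∈ A, (if k ∈ S then 0 else
          ((S.card.factorial * (a - S.card - 1).factorial : ℕ) : ℝ) / (a.factorial : ℝ)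
            * (c (insert j S) - c S))
      = ((a - S.card : ℕ) : ℝ) *
          (((S.card.factorial * (a - S.card - 1).factorial : ℕ) : ℝ) / (a.factorial : ℝ)
            * (c (insert j S) - c S)) := by
    intro S hS
    have hSA : S ⊆ A := Finset.mem_powerset.1 hS
    rw [Finset.sum_ite, Finset.sum_const, Finset.sum_const, smul_zero, zero_add, nsmul_eq_mul]
    congr 2
    have : A.filter (fun k => k ∉ S) = A \ S := by
      rw [Finset.sdiff_eq_filter]
    rw [this, Finset.card_sdiff_of_subset hSA, hAcard]
  rw [Finset.sum_congr rfl step2]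
  -- first term as a sum over the powerset
  have hins : insert j A = T := Finset.insert_erase hj
  have step3 : c T - c (T.erase j)
      = ∑ S ∈ A.powerset, (if S = A then c (insert j S) - c S else 0) := by
    rw [Finset.sum_ite_eq' A.powerset A (fun S => c (insert j S) - c S)]
    simp [hins]
    rfl
  rw [step3, shapley, Finset.mul_sum, ← Finset.sum_add_distrib]
  apply Finset.sum_congr rfl
  intro S hS
  have hSA : S ⊆ A := Finset.mem_powerset.1 hS
  by_cases hSeq : S = A
  · have hScard : S.card = a := by rw [hSeq, hAcard]
    have h1 : T.card - S.card - 1 = 0 := by omega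
    have h2 : a - S.card = 0 := by omega
    rw [if_pos hSeq, h1, h2, ha, hScard]
    push_cast [Nat.factorial_succ]
    have : (a.factorial : ℝ) ≠ 0 := Nat.cast_ne_zero.2 (Nat.factorial_ne_zero a)
    field_simp
    ring
  · have hslt : S.card < a := by
      have := Finset.card_lt_card (Finset.ssubset_iff_subset_ne.2 ⟨hSA, hSeq⟩)
      omega
    rw [if_neg hSeq, zero_add, ha]
    have h1 : a + 1 - S.card - 1 = a - S.card := by omega
    have h2 : (a - S.card).factorial = (a - S.card) * (a - S.card - 1).factorial := by
      have h3 : a - S.card = (a - S.card - 1) + 1 := by omega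
      conv_lhs => rw [h3]
      rw [Nat.factorial_succ, ← h3]
    have hfa : (a.factorial : ℝ) ≠ 0 := Nat.cast_ne_zero.2 (Nat.factorial_ne_zero a)
    have hfa1 : ((a+1).factorial : ℝ) ≠ 0 := Nat.cast_ne_zero.2 (Nat.factorial_ne_zero _)
    rw [h1]
    push_cast [Nat.factorial_succ, h2]
    field_simp

lemma shapley_core {ι : Type*} [DecidableEq ι] (c : Finset ι → ℝ) (N : Finset ι)
    (hc0 : c ∅ = 0)
    (hsub : ∀ j ∈ N, ∀ S T : Finset ι, S ⊆ T → T ⊆ N.erase j →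
      c (insert j T) - c T ≤ c (insert j S) - c S) :
    ∀ T ⊆ N, ∀ S ⊆ T, ∑ j ∈ S, shapley T c j ≤ c S := by
  intro T
  induction T using Finset.strongInduction with
  | _ T ih =>
    intro hTN S hST
    rcases Finset.eq_empty_or_nonempty T with rfl | hTne
    · rw [Finset.subset_empty.1 hST, Finset.sum_empty, hc0]
    have hT0 : (0:ℝ) < T.card := by
      exact_mod_cast Finset.card_pos.2 hTne
    rw [← mul_le_mul_iff_right₀ hT0, Finset.mul_sum]
    have key : ∑ j ∈ S, (T.card : ℝ) * shapley T c j
        ≤ (∑ j ∈ S, (c S - c (S.erase j))) + ∑ k ∈ T, c (S.erase k) := by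
      calc ∑ j ∈ S, (T.card : ℝ) * shapley T c j
          = ∑ j ∈ S, ((c T - c (T.erase j)) + ∑ k ∈ T.erase j, shapley (T.erase k) c j) :=
            Finset.sum_congr rfl fun j hj => shapley_rec T c j (hST hj)
        _ ≤ ∑ j ∈ S, ((c S - c (S.erase j)) + ∑ k ∈ T.erase j, shapley (T.erase k) c j) := by
            apply Finset.sum_le_sum
            intro j hj
            apply add_le_add_left
            have hjN : j ∈ N := hTN (hST hj)
            have h := hsub j hjN (S.erase j) (T.erase j)
              (Finset.erase_subset_erase j hST) (Finset.erase_subset_erase j hTN)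
            rwa [Finset.insert_erase (hST hj), Finset.insert_erase hj] at h
        _ = (∑ j ∈ S, (c S - c (S.erase j)))
              + ∑ j ∈ S, ∑ k ∈ T.erase j, shapley (T.erase k) c j :=
            Finset.sum_add_distrib
        _ = (∑ j ∈ S, (c S - c (S.erase j)))
              + ∑ k ∈ T, ∑ j ∈ S.erase k, shapley (T.erase k) c j := by
            rw [sum_swap_erase hST]
        _ ≤ (∑ j ∈ S, (c S - c (S.erase j))) + ∑ k ∈ T, c (S.erase k) := by
            apply add_le_add_right
            apply Finset.sum_le_sum
            intro k hk
            exact ih (T.erase k) (Finset.erase_ssubset hk)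
              ((Finset.erase_subset k T).trans hTN)
              (S.erase k) (Finset.erase_subset_erase k hST)
    refine key.trans (le_of_eq ?_)
    -- ∑_{j∈S}(cS - c(S.erase j)) + ∑_{k∈T} c(S.erase k) = T.card * c S
    have hsplit : ∑ k ∈ T, c (S.erase k)
        = (∑ k ∈ S, c (S.erase k)) + ((T \ S).card : ℝ) * c S := by
      rw [← Finset.sum_sdiff hST, add_comm]
      congr 1
      rw [Finset.sum_congr rfl (fun k hk => by
        rw [Finset.erase_eq_of_notMem (Finset.mem_sdiff.1 hk).2]), Finset.sum_const,
        nsmul_eq_mul]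
    rw [hsplit, Finset.sum_sub_distrib, Finset.sum_const, nsmul_eq_mul]
    have hcard : (T \ S).card + S.card = T.card := Finset.card_sdiff_add_card_eq_card hST
    have : ((T \ S).card : ℝ) = (T.card : ℝ) - S.card := by
      rw [← hcard]; push_cast; ring
    rw [this]
    ring

lemma inventory_core {ι : Type*} [DecidableEq ι] (N : Finset ι) (a : ℝ) (ha : 0 < a)
    (m : ι → ℝ) (w : Finset ι → ℝ)
    (hw : ∀ S : Finset ι, w S = 2 * a * Real.sqrt (∑ i ∈ S, (m i) ^ 2)) :
    ∀ S ⊆ N, ∑ j ∈ S, shapley N w j ≤ w S := by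
  apply shapley_core w N (by rw [hw]; simp) _ N (Finset.Subset.refl N)
  intro j _ S T hST hTN
  have hjT : j ∉ T := fun h => Finset.notMem_erase j N (hTN h)
  have hjS : j ∉ S := fun h => hjT (hST h)
  rw [hw, hw, hw, hw, Finset.sum_insert hjT, Finset.sum_insert hjS]
  have hu : (0:ℝ) ≤ ∑ i ∈ S, (m i) ^ 2 := Finset.sum_nonneg fun i _ => sq_nonneg _
  have huv : ∑ i ∈ S, (m i) ^ 2 ≤ ∑ i ∈ T, (m i) ^ 2 :=
    Finset.sum_le_sum_of_subset_of_nonneg hST fun i _ _ => sq_nonneg _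
  have h := sqrt_marg (sq_nonneg (m j)) hu huv
  have h2a : (0:ℝ) ≤ 2 * a := by linarith
  calc 2 * a * Real.sqrt ((m j)^2 + ∑ i ∈ T, (m i)^2) - 2 * a * Real.sqrt (∑ i ∈ T, (m i)^2)
      = 2 * a * (Real.sqrt ((∑ i ∈ T, (m i)^2) + (m j)^2) - Real.sqrt (∑ i ∈ T, (m i)^2)) := by
        rw [add_comm]; ring
    _ ≤ 2 * a * (Real.sqrt ((∑ i ∈ S, (m i)^2) + (m j)^2) - Real.sqrt (∑ i ∈ S, (m i)^2)) :=
        mul_le_mul_of_nonneg_left h h2a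
    _ = 2 * a * Real.sqrt ((m j)^2 + ∑ i ∈ S, (m i)^2) - 2 * a * Real.sqrt (∑ i ∈ S, (m i)^2) := by
        rw [add_comm ((m j)^2)]; ring

/-- The interval Shapley rule for an interval inventory situation (with `a > 0` and
`0 ≤ m̲ᵢ ≤ m̅ᵢ`), given by the Shapley values of the border inventory games
`w̲(S) = 2a·√(∑_{i∈S} m̲ᵢ²)` and `w̅(S) = 2a·√(∑_{i∈S} m̅ᵢ²)`, is Cross-Coalition
Acceptable: for every coalition `S ⊆ N`, `∑_{j∈S} φ_j(N, w̲) ≤ w̲(S)` and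
`∑_{j∈S} φ_j(N, w̅) ≤ w̅(S)`. -/
theorem interval_shapley_rule_CCA {ι : Type*} [DecidableEq ι] (N : Finset ι)
    (a : ℝ) (ha : 0 < a) (ml mu : ι → ℝ)
    (h0 : ∀ i ∈ N, 0 ≤ ml i) (h1 : ∀ i ∈ N, ml i ≤ mu i)
    (wl wu : Finset ι → ℝ)
    (hwl : ∀ S : Finset ι, wl S = 2 * a * Real.sqrt (∑ i ∈ S, (ml i) ^ 2))
    (hwu : ∀ S : Finset ι, wu S = 2 * a * Real.sqrt (∑ i ∈ S, (mu i) ^ 2)) :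
    ∀ S : Finset ι, S ⊆ N →
      (∑ j ∈ S, shapley N wl j ≤ wl S) ∧ (∑ j ∈ S, shapley N wu j ≤ wu S) := by
  intro S hS
  exact ⟨inventory_core N a ha ml wl hwl S hS, inventory_core N a ha mu wu hwu S hS⟩
end

section
/- Fix a finite set N, a > 0, and for each i ∈ N intervals 0 ≤ m̲_i ≤ m̅_i forming a monotonic interval inventory situation, i.e. for all S ⊆ T ⊆ N, √(Σ_{i∈T} m̅_i²) − √(Σ_{i∈T} m̲_i²) ≥ √(Σ_{i∈S} m̅_i²) − √(Σ_{i∈S} m̲_i²). Consider rules R assigning to every nonempty subset T ⊆ N a pair of real allocations (R̲_i(T), R̅_i(T))_{i∈T} such that Σ_{i∈T} R̲_i(T) = 2a·√(Σ_{i∈T} m̲_i²) and Σ_{i∈T} R̅_i(T) = 2a·√(Σ_{i∈T} m̅_i²). If R satisfies Balanced Cost — for every T ⊆ N with |T| ≥ 2 and all distinct i, j ∈ T: R̲_i(T) − R̲_i(T \ {j}) = R̲_j(T) − R̲_j(T \ {i}) and R̅_i(T) − R̅_i(T \ {j}) = R̅_j(T) − R̅_j(T \ {i}) — then R coincides with the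 interval Shapley rule: for every nonempty T ⊆ N and i ∈ T, R̲_i(T) = φ_i(T, w̲) and R̅_i(T) = φ_i(T, w̅), where w̲(S) = 2a·√(Σ_{l∈S} m̲_l²), w̅(S) = 2a·√(Σ_{l∈S} m̅_l²), and φ_i(T, c) = Σ_{S ⊆ T \ {i}} (|S|!·(|T| − |S| − 1)!/|T|!)·(c(S ∪ {i}) − c(S)). Conversely, the interval Shapley rule satisfies Balanced Cost. -/
namespace IntervalShapleyAux
variable {ι : Type*} [DecidableEq ι]

lemma coeff_identity (s k : ℕ) :
    ((s.factorial * (k+1).factorial : ℕ) : ℝ) / ((s+k+2).factorial : ℝ)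
      - ((s.factorial * k.factorial : ℕ) : ℝ) / ((s+k+1).factorial : ℝ)
      = -(((s+1).factorial * k.factorial : ℕ) : ℝ) / ((s+k+2).factorial : ℝ) := by
  have e1 : (s+k+2).factorial = (s+k+2) * (s+k+1).factorial := rfl
  have e2 : (k+1).factorial = (k+1) * k.factorial := rfl
  have e3 : (s+1).factorial = (s+1) * s.factorial := rfl
  have h1 : ((s+k+1).factorial : ℝ) ≠ 0 := Nat.cast_ne_zero.2 (Nat.factorial_ne_zero _)
  have h2 : ((s:ℝ)+k+2) ≠ 0 := by positivity
  rw [e1, e2, e3]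
  push_cast
  field_simp
  ring

/-- The symmetric-form expression for `φ_i(T) - φ_i(T\{j})`. -/
lemma shapley_diff (T : Finset ι) (c : Finset ι → ℝ) {i j : ι}
    (hi : i ∈ T) (hj : j ∈ T) (hij : i ≠ j) :
    shapley T c i - shapley (T.erase j) c i
      = ∑ S ∈ ((T.erase i).erase j).powerset,
          (((S.card+1).factorial * (T.card - S.card - 2).factorial : ℕ) : ℝ)
              / (T.card.factorial : ℝ)
            * (c (insert i (insert j S)) - c (insert i S) - c (insert j S) + c S) := by
  classical
  set U := (T.erase i).erase j with hU
  have hjU : j ∉ U := Finset.notMem_erase _ _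
  have hjTi : j ∈ T.erase i := Finset.mem_erase.2 ⟨hij.symm, hj⟩
  have hTi : T.erase i = insert j U := (Finset.insert_erase hjTi).symm
  have hUeq : (T.erase j).erase i = U := Finset.erase_right_comm
  have hcardTj : (T.erase j).card = T.card - 1 := Finset.card_erase_of_mem hj
  have hcardU : U.card = T.card - 2 := by
    rw [hU, Finset.card_erase_of_mem hjTi, Finset.card_erase_of_mem hi]
    omega
  have hT2 : 2 ≤ T.card := Finset.one_lt_card.2 ⟨i, hi, j, hj, hij⟩
  unfold shapley
  rw [hTi, Finset.sum_powerset_insert hjU, hUeq, hcardTj]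
  rw [← Finset.sum_add_distrib, ← Finset.sum_sub_distrib]
  refine Finset.sum_congr rfl ?_
  intro S hS
  have hSU : S ⊆ U := Finset.mem_powerset.1 hS
  have hjS : j ∉ S := fun h => hjU (hSU h)
  have hcards : (insert j S).card = S.card + 1 := Finset.card_insert_of_notMem hjS
  have hSle : S.card + 2 ≤ T.card := by
    have := Finset.card_le_card hSU
    omega
  obtain ⟨k, hk⟩ : ∃ k, T.card = S.card + k + 2 := ⟨T.card - S.card - 2, by omega⟩
  have e1 : T.card - S.card - 1 = k + 1 := by omega
  have e2 : T.card - (S.card + 1) - 1 = k := by omega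
  have e3 : T.card - 1 - S.card - 1 = k := by omega
  have e4 : T.card - 1 = S.card + k + 1 := by omega
  have e5 : T.card - S.card - 2 = k := by omega
  rw [hcards, e1, e2, e3, e4, e5, hk]
  have hcoeff := coeff_identity S.card k
  linear_combination (c (insert i S) - c S) * hcoeff

lemma shapley_bc (T : Finset ι) (c : Finset ι → ℝ) {i j : ι}
    (hi : i ∈ T) (hj : j ∈ T) (hij : i ≠ j) :
    shapley T c i - shapley (T.erase j) c i
      = shapley T c j - shapley (T.erase i) c j := by
  rw [shapley_diff T c hi hj hij, shapley_diff T c hj hi hij.symm]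
  rw [show (T.erase j).erase i = (T.erase i).erase j from Finset.erase_right_comm]
  refine Finset.sum_congr rfl ?_
  intro S hS
  rw [Finset.insert_comm]
  ring

lemma shapley_eff (T : Finset ι) (c : Finset ι → ℝ) (hT : T.Nonempty) :
    ∑ i ∈ T, shapley T c i = c T - c ∅ := by
  classical
  have htpos : 0 < T.card := Finset.card_pos.2 hT
  -- split each shapley value into positive and negative parts
  have hsplit : ∑ i ∈ T, shapley T c i
      = (∑ i ∈ T, ∑ S ∈ (T.erase i).powerset,
          ((S.card.factorial * (T.card - S.card - 1).factorial : ℕ) : ℝ) / (T.card.factorial : ℝ)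
            * c (insert i S))
        - ∑ i ∈ T, ∑ S ∈ (T.erase i).powerset,
          ((S.card.factorial * (T.card - S.card - 1).factorial : ℕ) : ℝ) / (T.card.factorial : ℝ)
            * c S := by
    rw [← Finset.sum_sub_distrib]
    refine Finset.sum_congr rfl fun i _ => ?_
    rw [← Finset.sum_sub_distrib]
    exact Finset.sum_congr rfl fun S _ => by ring
  -- powerset of erase as filter
  have hpow : ∀ i ∈ T, (T.erase i).powerset
      = T.powerset.filter (fun S => i ∉ S) := by
    intro i _
    ext S
    simp [Finset.subset_erase, and_comm]
  -- the negative part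
  have hQ : ∑ i ∈ T, ∑ S ∈ (T.erase i).powerset,
        ((S.card.factorial * (T.card - S.card - 1).factorial : ℕ) : ℝ) / (T.card.factorial : ℝ) * c S
      = ∑ S ∈ T.powerset, ((T.card - S.card : ℕ) : ℝ) *
          (((S.card.factorial * (T.card - S.card - 1).factorial : ℕ) : ℝ) / (T.card.factorial : ℝ) * c S) := by
    rw [Finset.sum_congr rfl (fun i hi => by rw [hpow i hi, Finset.sum_filter])]
    rw [Finset.sum_comm]
    refine Finset.sum_congr rfl fun S hS => ?_
    have hST : S ⊆ T := Finset.mem_powerset.1 hS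
    rw [← Finset.sum_filter, Finset.sum_const, ← Finset.sdiff_eq_filter,
      Finset.card_sdiff_of_subset hST, nsmul_eq_mul]
  -- the positive part, reindexed by `A = insert i S`
  have hP : ∑ i ∈ T, ∑ S ∈ (T.erase i).powerset,
        ((S.card.factorial * (T.card - S.card - 1).factorial : ℕ) : ℝ) / (T.card.factorial : ℝ)
          * c (insert i S)
      = ∑ A ∈ T.powerset, (A.card : ℝ) *
          ((((A.card - 1).factorial * (T.card - A.card).factorial : ℕ) : ℝ)
              / (T.card.factorial : ℝ) * c A) := by
    have hstep : ∀ i ∈ T, ∑ S ∈ (T.erase i).powerset,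
        ((S.card.factorial * (T.card - S.card - 1).factorial : ℕ) : ℝ) / (T.card.factorial : ℝ)
          * c (insert i S)
        = ∑ A ∈ T.powerset.filter (fun A => i ∈ A),
            (((A.card - 1).factorial * (T.card - A.card).factorial : ℕ) : ℝ)
              / (T.card.factorial : ℝ) * c A := by
      intro i hiT
      refine Finset.sum_nbij' (fun S => insert i S) (fun A => A.erase i) ?_ ?_ ?_ ?_ ?_
      · intro S hS
        have hSU : S ⊆ T.erase i := Finset.mem_powerset.1 hS
        simp only [Finset.mem_filter, Finset.mem_powerset]
        exact ⟨Finset.insert_subset hiT (hSU.trans (Finset.erase_subset _ _)),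
          Finset.mem_insert_self _ _⟩
      · intro A hA
        simp only [Finset.mem_filter, Finset.mem_powerset] at hA
        exact Finset.mem_powerset.2 (Finset.erase_subset_erase _ hA.1)
      · intro S hS
        have hSU : S ⊆ T.erase i := Finset.mem_powerset.1 hS
        have hiS : i ∉ S := fun h => (Finset.mem_erase.1 (hSU h)).1 rfl
        exact Finset.erase_insert hiS
      · intro A hA
        simp only [Finset.mem_filter, Finset.mem_powerset] at hA
        exact Finset.insert_erase hA.2
      · intro S hS
        have hSU : S ⊆ T.erase i := Finset.mem_powerset.1 hS
        have hiS : i ∉ S := fun h => (Finset.mem_erase.1 (hSU h)).1 rfl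
        have h1 : (insert i S).card = S.card + 1 := Finset.card_insert_of_notMem hiS
        rw [h1]
        have e1 : S.card + 1 - 1 = S.card := by omega
        have e2 : T.card - (S.card + 1) = T.card - S.card - 1 := by omega
        rw [e1, e2]
    rw [Finset.sum_congr rfl hstep]
    rw [Finset.sum_congr rfl (fun i (_ : i ∈ T) => Finset.sum_filter _ _)]
    rw [Finset.sum_comm]
    refine Finset.sum_congr rfl fun A hA => ?_
    have hAT : A ⊆ T := Finset.mem_powerset.1 hA
    rw [← Finset.sum_filter, Finset.sum_const, Finset.filter_mem_eq_inter,
      Finset.inter_eq_right.2 hAT, nsmul_eq_mul]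
  rw [hsplit, hP, hQ, ← Finset.sum_sub_distrib]
  -- now compute the coefficient sum
  have hTmem : T ∈ T.powerset := Finset.mem_powerset_self T
  have hTne : T ≠ (∅ : Finset ι) := Finset.nonempty_iff_ne_empty.1 hT
  have hEmem : (∅ : Finset ι) ∈ T.powerset.erase T := by
    simp [Finset.mem_erase, Ne.symm hTne]
  set g : Finset ι → ℝ := fun A =>
    (A.card : ℝ) * ((((A.card - 1).factorial * (T.card - A.card).factorial : ℕ) : ℝ)
        / (T.card.factorial : ℝ) * c A)
      - ((T.card - A.card : ℕ) : ℝ) *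
        (((A.card.factorial * (T.card - A.card - 1).factorial : ℕ) : ℝ)
            / (T.card.factorial : ℝ) * c A) with hg
  have hfact : (T.card.factorial : ℝ) ≠ 0 := Nat.cast_ne_zero.2 (Nat.factorial_ne_zero _)
  rw [← Finset.add_sum_erase _ g hTmem, ← Finset.add_sum_erase _ g hEmem]
  have nfac : ∀ n : ℕ, 0 < n → n * (n - 1).factorial = n.factorial := by
    intro n hn
    obtain ⟨m, hm⟩ : ∃ m, n = m + 1 := ⟨n - 1, by omega⟩
    subst hm
    simp [Nat.factorial_succ]
  have hgT : g T = c T := by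
    rw [hg]
    simp only [Nat.sub_self, Nat.factorial_zero, mul_one, Nat.cast_zero, zero_mul, sub_zero]
    have key : ((T.card * (T.card - 1).factorial : ℕ) : ℝ) = (T.card.factorial : ℝ) := by
      exact_mod_cast congrArg (Nat.cast : ℕ → ℝ) (nfac T.card htpos)
    push_cast at key
    field_simp
    linear_combination c T * key
  have hgE : g (∅ : Finset ι) = -c ∅ := by
    rw [hg]
    simp only [Finset.card_empty, Nat.cast_zero, zero_mul, zero_sub, Nat.sub_zero,
      Nat.factorial_zero, one_mul, neg_inj]
    have key : ((T.card * (T.card - 1).factorial : ℕ) : ℝ) = (T.card.factorial : ℝ) := by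
      exact_mod_cast congrArg (Nat.cast : ℕ → ℝ) (nfac T.card htpos)
    push_cast at key
    field_simp
    linear_combination c ∅ * key
  have hrest : ∀ A ∈ (T.powerset.erase T).erase ∅, g A = 0 := by
    intro A hA
    have hAne : A ≠ ∅ := (Finset.mem_erase.1 hA).1
    have hA' := (Finset.mem_erase.1 hA).2
    have hAT : A ≠ T := (Finset.mem_erase.1 hA').1
    have hAsub : A ⊆ T := Finset.mem_powerset.1 (Finset.mem_erase.1 hA').2
    have hapos : 0 < A.card := Finset.card_pos.2 (Finset.nonempty_iff_ne_empty.2 hAne)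
    have halt : A.card < T.card := Finset.card_lt_card (ssubset_of_subset_of_ne hAsub hAT)
    have nkey : A.card * ((A.card - 1).factorial * (T.card - A.card).factorial)
        = (T.card - A.card) * (A.card.factorial * (T.card - A.card - 1).factorial) := by
      rw [← mul_assoc, nfac A.card hapos, ← nfac (T.card - A.card) (by omega)]
      ring
    have key : (A.card : ℝ) * (((A.card - 1).factorial * (T.card - A.card).factorial : ℕ) : ℝ)
        = ((T.card - A.card : ℕ) : ℝ) *
            ((A.card.factorial * (T.card - A.card - 1).factorial : ℕ) : ℝ) := by
      exact_mod_cast congrArg (Nat.cast : ℕ → ℝ) nkey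
    rw [hg]
    push_cast [Nat.cast_sub hapos, Nat.cast_sub halt.le] at key ⊢
    field_simp
    linear_combination c A * key
  rw [hgT, hgE, Finset.sum_eq_zero hrest]
  ring

/-- uniqueness of a rule satisfying efficiency and balanced cost -/
lemma unique_bc (N : Finset ι) (w : Finset ι → ℝ) (hw0 : w ∅ = 0)
    (R : Finset ι → ι → ℝ)
    (heff : ∀ T : Finset ι, T ⊆ N → T.Nonempty → ∑ i ∈ T, R T i = w T)
    (hbc : ∀ T : Finset ι, T ⊆ N → 2 ≤ T.card → ∀ i ∈ T, ∀ j ∈ T, i ≠ j →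
      R T i - R (T.erase j) i = R T j - R (T.erase i) j) :
    ∀ T : Finset ι, T ⊆ N → T.Nonempty → ∀ i ∈ T, R T i = shapley T w i := by
  classical
  intro T
  induction T using Finset.strongInduction with
  | _ T ih =>
    intro hTN hTne i hiT
    by_cases hone : T.card = 1
    · obtain ⟨x, hx⟩ := Finset.card_eq_one.1 hone
      subst hx
      have hix : i = x := Finset.mem_singleton.1 hiT
      subst hix
      have h1 := heff {i} hTN ⟨i, Finset.mem_singleton_self i⟩
      have h2 := shapley_eff {i} w ⟨i, Finset.mem_singleton_self i⟩
      rw [Finset.sum_singleton] at h1 h2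
      rw [h1, h2, hw0]
      ring
    · have hcard2 : 2 ≤ T.card := by
        have : 0 < T.card := Finset.card_pos.2 hTne
        omega
      have key : ∀ j ∈ T, R T i - R T j = shapley T w i - shapley T w j := by
        intro j hjT
        rcases eq_or_ne j i with rfl | hji
        · ring
        · have hij : i ≠ j := hji.symm
          have h1 := hbc T hTN hcard2 i hiT j hjT hij
          have hTj : T.erase j ⊂ T := Finset.erase_ssubset hjT
          have hTi' : T.erase i ⊂ T := Finset.erase_ssubset hiT
          have h2 := ih (T.erase j) hTj ((Finset.erase_subset _ _).trans hTN)
            ⟨i, Finset.mem_erase.2 ⟨hij, hiT⟩⟩ i (Finset.mem_erase.2 ⟨hij, hiT⟩)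
          have h3 := ih (T.erase i) hTi' ((Finset.erase_subset _ _).trans hTN)
            ⟨j, Finset.mem_erase.2 ⟨hji, hjT⟩⟩ j (Finset.mem_erase.2 ⟨hji, hjT⟩)
          have h4 := shapley_bc T w hiT hjT hij
          linarith
      have hsum : ∑ j ∈ T, (R T i - R T j) = ∑ j ∈ T, (shapley T w i - shapley T w j) :=
        Finset.sum_congr rfl key
      rw [Finset.sum_sub_distrib, Finset.sum_sub_distrib, Finset.sum_const,
        Finset.sum_const, heff T hTN hTne, shapley_eff T w hTne, hw0, nsmul_eq_mul,
        nsmul_eq_mul] at hsum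
      have hc : ((T.card : ℝ)) ≠ 0 := by
        have : 0 < T.card := Finset.card_pos.2 hTne
        positivity
      have : (T.card : ℝ) * R T i = (T.card : ℝ) * shapley T w i := by linarith
      exact mul_left_cancel₀ hc this

end IntervalShapleyAux


/-- For a monotonic interval inventory situation (i.e. the length of the coalition cost
interval is monotone in the coalition), the interval Shapley rule is the unique interval
allocation rule satisfying the Balanced Cost property.  Here a rule assigns, to every
nonempty `T ⊆ N`, lower and upper allocations `Rl T i`, `Ru T i` for `i ∈ T` summing to
the endpoints `w̲(T) = 2a·√(∑_{i∈T} m̲ᵢ²)` and `w̅(T) = 2a·√(∑_{i∈T} m̅ᵢ²)` of the total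
interval cost.  Any such rule satisfying Balanced Cost coincides with the interval
Shapley rule `(φ_i(T, w̲), φ_i(T, w̅))`; conversely, the interval Shapley rule satisfies
Balanced Cost. -/
theorem interval_shapley_characterization {ι : Type*} [DecidableEq ι] (N : Finset ι)
    (a : ℝ) (ha : 0 < a) (ml mu : ι → ℝ)
    (h0 : ∀ i ∈ N, 0 ≤ ml i) (h1 : ∀ i ∈ N, ml i ≤ mu i)
    (hmono : ∀ S T : Finset ι, S ⊆ T → T ⊆ N →
      Real.sqrt (∑ i ∈ T, (mu i) ^ 2) - Real.sqrt (∑ i ∈ T, (ml i) ^ 2)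
        ≥ Real.sqrt (∑ i ∈ S, (mu i) ^ 2) - Real.sqrt (∑ i ∈ S, (ml i) ^ 2))
    (wl wu : Finset ι → ℝ)
    (hwl : ∀ S : Finset ι, wl S = 2 * a * Real.sqrt (∑ l ∈ S, (ml l) ^ 2))
    (hwu : ∀ S : Finset ι, wu S = 2 * a * Real.sqrt (∑ l ∈ S, (mu l) ^ 2)) :
    (∀ Rl Ru : Finset ι → ι → ℝ,
      -- R is an interval allocation rule on every nonempty subcoalition of N
      (∀ T : Finset ι, T ⊆ N → T.Nonempty →
        (∑ i ∈ T, Rl T i = wl T) ∧ (∑ i ∈ T, Ru T i = wu T)) →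
      -- R satisfies Balanced Cost
      (∀ T : Finset ι, T ⊆ N → 2 ≤ T.card → ∀ i ∈ T, ∀ j ∈ T, i ≠ j →
        (Rl T i - Rl (T.erase j) i = Rl T j - Rl (T.erase i) j) ∧
        (Ru T i - Ru (T.erase j) i = Ru T j - Ru (T.erase i) j)) →
      -- then R is the interval Shapley rule
      ∀ T : Finset ι, T ⊆ N → T.Nonempty → ∀ i ∈ T,
        Rl T i = shapley T wl i ∧ Ru T i = shapley T wu i) ∧
    -- conversely, the interval Shapley rule satisfies Balanced Cost
    (∀ T : Finset ι, T ⊆ N → 2 ≤ T.card → ∀ i ∈ T, ∀ j ∈ T, i ≠ j →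
      (shapley T wl i - shapley (T.erase j) wl i
          = shapley T wl j - shapley (T.erase i) wl j) ∧
      (shapley T wu i - shapley (T.erase j) wu i
          = shapley T wu j - shapley (T.erase i) wu j)) := by
  have hwl0 : wl ∅ = 0 := by simp [hwl ∅]
  have hwu0 : wu ∅ = 0 := by simp [hwu ∅]
  constructor
  · intro Rl Ru halloc hbc T hTN hTne i hiT
    refine ⟨?_, ?_⟩
    · exact IntervalShapleyAux.unique_bc N wl hwl0 Rl (fun T h hn => (halloc T h hn).1)
        (fun T h h2 i hi j hj hij => (hbc T h h2 i hi j hj hij).1) T hTN hTne i hiT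
    · exact IntervalShapleyAux.unique_bc N wu hwu0 Ru (fun T h hn => (halloc T h hn).2)
        (fun T h h2 i hi j hj hij => (hbc T h h2 i hi j hj hij).2) T hTN hTne i hiT
  · intro T hTN h2 i hi j hj hij
    exact ⟨IntervalShapleyAux.shapley_bc T wl hi hj hij,
      IntervalShapleyAux.shapley_bc T wu hi hj hij⟩
end
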